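/- Let Ξ = {(α,τ) ∈ ℝ × ℝ≥0 : τ ≤ l, w ≤ |α-1|, s ≤ (1-α)τ ≤ 1-d} ∪ {(1,τ) : 0 ≤ τ ≤ l} for constants l ≥ 0, w > 0, 0 < d < 1, s < 0. Then every critic φ_{(α,τ)}(x) = log(exp_α(τ(x-1))), viewed as a function on [0,1], is uniformly bounded over Ξ and uniformly Lipschitz: sup_{(α,τ)∈Ξ} ‖φ_{(α,τ)}‖_Lip ≤ L < ∞ for some finite L depending on l, d, s. -/

import Mathlib

/-- The `α`-exponential function. -/
noncomputable def expAlpha (α u : ℝ) : ℝ :=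
  if α = 1 then Real.exp u else (max (1 + (1 - α) * u) 0) ^ ((1 : ℝ) / (1 - α))

/-- The critic `φ_{(α,τ)}(x) = log(exp_α(τ(x-1)))` viewed as a function on `[0,1]`. -/
noncomputable def phiCritic (p : ℝ × ℝ) (x : ℝ) : ℝ :=
  Real.log (expAlpha p.1 (p.2 * (x - 1)))

/-- The parameter set `Ξ`. -/
def XiSet (l w d s : ℝ) : Set (ℝ × ℝ) :=
  {p | 0 ≤ p.2 ∧ p.2 ≤ l ∧ w ≤ |p.1 - 1| ∧
        s ≤ (1 - p.1) * p.2 ∧ (1 - p.1) * p.2 ≤ 1 - d}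
    ∪ {p | p.1 = 1 ∧ 0 ≤ p.2 ∧ p.2 ≤ l}

/-! On `[0, 1]` the argument `t = 1 + (1 - α) τ (x - 1)` of the logarithm stays in `[d, ∞)`
as soon as `(1 - α) τ ≤ 1 - d`, and `φ_{(α,τ)}' = τ / t` (also for `α = 1`), so every critic
on `Ξ` is `l / d`-Lipschitz. As `φ_{(α,τ)}(1) = log (exp_α 0) = 0`, the same constant bounds
its values. -/

open Real Set Topology

theorem log_expAlpha_one (u : ℝ) : log (expAlpha 1 u) = u := by
  simp [expAlpha]

theorem log_expAlpha_of_ne_one {α u : ℝ} (hα : α ≠ 1) (hu : 0 < 1 + (1 - α) * u) :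
    log (expAlpha α u) = log (1 + (1 - α) * u) / (1 - α) := by
  rw [expAlpha, if_neg hα, max_eq_left hu.le, log_rpow hu, one_div_mul_eq_div]

theorem expAlpha_zero (α : ℝ) : expAlpha α 0 = 1 := by
  by_cases hα : α = 1 <;> simp [expAlpha, hα]

theorem hasDerivAt_log_expAlpha {α u : ℝ} (hu : 0 < 1 + (1 - α) * u) :
    HasDerivAt (fun v => log (expAlpha α v)) (1 / (1 + (1 - α) * u)) u := by
  by_cases hα : α = 1
  · subst hα
    simp only [log_expAlpha_one, sub_self, zero_mul, add_zero, div_one]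
    exact hasDerivAt_id' u
  have hα' : 1 - α ≠ 0 := sub_ne_zero.2 (Ne.symm hα)
  have hlin : HasDerivAt (fun v => 1 + (1 - α) * v) (1 - α) u := by
    simpa using ((hasDerivAt_id u).const_mul (1 - α)).const_add 1
  have hpos : ∀ᶠ v in 𝓝 u, 0 < 1 + (1 - α) * v :=
    hlin.continuousAt.eventually (lt_mem_nhds hu)
  refine HasDerivAt.congr_of_eventuallyEq ?_
    (hpos.mono fun v hv => log_expAlpha_of_ne_one hα hv)
  refine ((hlin.log hu.ne').div_const (1 - α)).congr_deriv ?_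
  rw [div_right_comm, div_self hα']

theorem hasDerivAt_phiCritic {α τ x : ℝ} (hx : 0 < 1 + (1 - α) * τ * (x - 1)) :
    HasDerivAt (phiCritic (α, τ)) (τ / (1 + (1 - α) * τ * (x - 1))) x := by
  have hshift : HasDerivAt (fun y : ℝ => τ * (y - 1)) τ x := by
    simpa using ((hasDerivAt_id x).sub_const 1).const_mul τ
  rw [mul_assoc] at hx
  refine ((hasDerivAt_log_expAlpha hx).comp x hshift).congr_deriv ?_
  ring

theorem phiCritic_one (p : ℝ × ℝ) : phiCritic p 1 = 0 := by
  simp [phiCritic, expAlpha_zero]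

theorem le_one_add_mul_sub_one {c d x : ℝ} (hd : d ≤ 1) (hc : c ≤ 1 - d)
    (hx : x ∈ Icc (0 : ℝ) 1) :
    d ≤ 1 + c * (x - 1) := by
  obtain ⟨hx0, hx1⟩ := hx
  rcases le_total 0 c with h | h <;> nlinarith

theorem lipschitzOnWith_phiCritic {α τ d : ℝ} (hτ : 0 ≤ τ) (hd0 : 0 < d) (hd1 : d ≤ 1)
    (hc : (1 - α) * τ ≤ 1 - d) :
    LipschitzOnWith (τ / d).toNNReal (phiCritic (α, τ)) (Icc 0 1) := by
  refine (convex_Icc 0 1).lipschitzOnWith_of_nnnorm_hasDerivWithin_le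
    (fun x hx => (hasDerivAt_phiCritic ?_).hasDerivWithinAt) fun x hx => ?_
  · exact hd0.trans_le (le_one_add_mul_sub_one hd1 hc hx)
  · have hdt := le_one_add_mul_sub_one hd1 hc hx
    rw [← NNReal.coe_le_coe, coe_nnnorm, Real.norm_eq_abs,
      abs_of_nonneg (div_nonneg hτ (hd0.le.trans hdt))]
    exact (div_le_div_of_nonneg_left hτ hd0 hdt).trans (le_coe_toNNReal _)

theorem bounds_of_mem_XiSet {l w d s : ℝ} (hd1 : d < 1) {p : ℝ × ℝ}
    (hp : p ∈ XiSet l w d s) :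
    0 ≤ p.2 ∧ p.2 ≤ l ∧ (1 - p.1) * p.2 ≤ 1 - d := by
  rcases hp with ⟨hτ, hτl, -, -, hc⟩ | ⟨hα, hτ, hτl⟩
  · exact ⟨hτ, hτl, hc⟩
  · exact ⟨hτ, hτl, by rw [hα]; linarith⟩

theorem phiCritic_uniformly_bounded_and_lipschitz_general
    (l w d s : ℝ) (hd0 : 0 < d) (hd1 : d < 1) :
    (∃ a b : ℝ, ∀ p ∈ XiSet l w d s, ∀ x ∈ Set.Icc (0 : ℝ) 1,
        phiCritic p x ∈ Set.Icc a b)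
    ∧ ∃ L : NNReal, ∀ p ∈ XiSet l w d s,
        LipschitzOnWith L (phiCritic p) (Set.Icc (0 : ℝ) 1) := by
  set L := (l / d).toNNReal
  have hlip : ∀ p ∈ XiSet l w d s, LipschitzOnWith L (phiCritic p) (Icc 0 1) := by
    rintro ⟨α, τ⟩ hp
    obtain ⟨hτ, hτl, hc⟩ := bounds_of_mem_XiSet hd1 hp
    exact (lipschitzOnWith_phiCritic hτ hd0 hd1.le hc).weaken
      (toNNReal_le_toNNReal (by gcongr))
  refine ⟨⟨-L, L, fun p hp x hx => abs_le.1 ?_⟩, L, hlip⟩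
  have hone : (1 : ℝ) ∈ Icc 0 1 := right_mem_Icc.2 zero_le_one
  have hdist := (hlip p hp).dist_le_mul x hx 1 hone
  rw [phiCritic_one, dist_zero_right, norm_eq_abs] at hdist
  calc |phiCritic p x| ≤ L * dist x 1 := hdist
    _ ≤ L * 1 := by gcongr; exact dist_le_of_mem_Icc_01 hx hone
    _ = L := mul_one _

/-- every critic `φ_{(α,τ)}` with `(α,τ) ∈ Ξ` is uniformly bounded over
`Ξ` on `[0,1]`, and uniformly Lipschitz: `sup_{(α,τ)∈Ξ} ‖φ_{(α,τ)}‖_Lip ≤ L < ∞` for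
some finite `L` depending on `l, d, s`. -/
theorem phiCritic_uniformly_bounded_and_lipschitz
    (l w d s : ℝ) (hl : 0 ≤ l) (hw : 0 < w) (hd0 : 0 < d) (hd1 : d < 1) (hs : s < 0) :
    (∃ a b : ℝ, ∀ p ∈ XiSet l w d s, ∀ x ∈ Set.Icc (0 : ℝ) 1,
        phiCritic p x ∈ Set.Icc a b)
    ∧ ∃ L : NNReal, ∀ p ∈ XiSet l w d s,
        LipschitzOnWith L (phiCritic p) (Set.Icc (0 : ℝ) 1) :=
  phiCritic_uniformly_bounded_and_lipschitz_general l w d s hd0 hd1
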